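/- arXiv:2604.23778 — 3 statements merged into one kernel-verified Lean document; each statement's English description precedes it below -/
import Mathlib

section
/- After processing any finite sequence of packets through the pipeline insertion process starting from an all-zero table, no (ID, count) pair with positive count appears in two distinct positions of the table. -/
section LexPipeline

variable {ID Idx : Type} [LinearOrder ID] [DecidableEq Idx]

/-- One pipeline stage with lexicographic `(count, ID)` comparison.  An active packet
`p` at vector `n` looks at position `h n p.1`: if `p` is lexicographically strictly
greater than the stored pair it writes itself there and carries forward the evicted
pair; if it is strictly smaller it continues unchanged; if the pairs are identical the
packet stops (becomes inactive). -/
def lexStep (h : ℕ → ID → Idx) (n : ℕ)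
    (st : (ℕ → Idx → ID × ℕ) × Option (ID × ℕ)) :
    (ℕ → Idx → ID × ℕ) × Option (ID × ℕ) :=
  match st with
  | (T, none) => (T, none)
  | (T, some p) =>
    let s := T n (h n p.1)
    if s.2 < p.2 ∨ (s.2 = p.2 ∧ s.1 < p.1) then
      ((fun i j => if i = n ∧ j = h n p.1 then p else T i j), some s)
    else if s = p then (T, none)
    else (T, some p)

/-- State after an inserted packet has traversed the first `n` vectors. -/
def lexRun (h : ℕ → ID → Idx) (T : ℕ → Idx → ID × ℕ) (p : ID × ℕ) :
    ℕ → (ℕ → Idx → ID × ℕ) × Option (ID × ℕ)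
  | 0 => (T, some p)
  | n + 1 => lexStep h n (lexRun h T p n)

/-- Table resulting from inserting packet `p` through all `d` vectors. -/
def lexInsert (h : ℕ → ID → Idx) (d : ℕ) (T : ℕ → Idx → ID × ℕ) (p : ID × ℕ) :
    ℕ → Idx → ID × ℕ :=
  (lexRun h T p d).1

/-- Table after processing a sequence of packets one after another. -/
def lexTableAfter (h : ℕ → ID → Idx) (d : ℕ) (T₀ : ℕ → Idx → ID × ℕ)
    (l : List (ID × ℕ)) : ℕ → Idx → ID × ℕ :=
  l.foldl (lexInsert h d) T₀

end LexPipeline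

/-!
Every positive pair stored in vector `m` sits at its own hash slot `h m id`, and is
lexicographically strictly smaller than the pairs at its hash slots in all earlier vectors;
a packet still in flight after `n` vectors is likewise smaller than its slots in those `n`
vectors. Each stage preserves this: a write only replaces a pair by a larger one, the
evicted pair was below all earlier slots and is below the packet that evicted it, and a
packet passes a slot only when it is smaller than the pair stored there. If the same
positive pair were stored in vectors `i < i'`, it would occupy its own slot in vector `i`
and hence be strictly smaller than itself.
-/

section PathInvariant

variable {ID Idx : Type}

def lexKey (p : ID × ℕ) : ℕ ×ₗ ID := toLex (p.2, p.1)

lemma lexKey_injective : Function.Injective (lexKey : ID × ℕ → ℕ ×ₗ ID) := by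
  intro s p hsp
  simp only [lexKey, toLex_inj, Prod.mk.injEq] at hsp
  exact Prod.ext hsp.2 hsp.1

def writeAt [DecidableEq Idx] (T : ℕ → Idx → ID × ℕ) (n : ℕ) (j : Idx) (p : ID × ℕ) :
    ℕ → Idx → ID × ℕ :=
  fun i j' => if i = n ∧ j' = j then p else T i j'

section WriteAt

variable [DecidableEq Idx] {T : ℕ → Idx → ID × ℕ} {n : ℕ} {j : Idx} {p : ID × ℕ}

lemma writeAt_self : writeAt T n j p n j = p := if_pos ⟨rfl, rfl⟩

lemma writeAt_of_ne {i : ℕ} (hi : i ≠ n) : writeAt T n j p i = T i :=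
  funext fun _ => if_neg fun hij => hi hij.1

lemma lexKey_le_writeAt [LinearOrder ID] (hlt : lexKey (T n j) < lexKey p) (i : ℕ) (j' : Idx) :
    lexKey (T i j') ≤ lexKey (writeAt T n j p i j') := by
  unfold writeAt
  split_ifs with hij
  · obtain ⟨rfl, rfl⟩ := hij
    exact hlt.le
  · exact le_rfl

end WriteAt

variable [LinearOrder ID]

lemma lexKey_lt_lexKey_iff {s p : ID × ℕ} :
    lexKey s < lexKey p ↔ s.2 < p.2 ∨ s.2 = p.2 ∧ s.1 < p.1 :=
  Prod.Lex.toLex_lt_toLex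

lemma lexStep_some [DecidableEq Idx] (h : ℕ → ID → Idx) (n : ℕ) (T : ℕ → Idx → ID × ℕ)
    (p : ID × ℕ) :
    lexStep h n (T, some p) =
      if lexKey (T n (h n p.1)) < lexKey p then
        (writeAt T n (h n p.1) p, some (T n (h n p.1)))
      else if T n (h n p.1) = p then (T, none) else (T, some p) := by
  simp only [lexStep, lexKey_lt_lexKey_iff]
  rfl

variable (h : ℕ → ID → Idx)

def IsBelowPath (T : ℕ → Idx → ID × ℕ) (p : ID × ℕ) (n : ℕ) : Prop :=
  ∀ r < n, lexKey p < lexKey (T r (h r p.1))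

def PathSorted (T : ℕ → Idx → ID × ℕ) : Prop :=
  ∀ m j, 0 < (T m j).2 → j = h m (T m j).1 ∧ IsBelowPath h T (T m j) m

def RunInvariant (n : ℕ) (st : (ℕ → Idx → ID × ℕ) × Option (ID × ℕ)) : Prop :=
  PathSorted h st.1 ∧ ∀ p ∈ st.2, 0 < p.2 → IsBelowPath h st.1 p n

variable {h} {T : ℕ → Idx → ID × ℕ}

lemma isBelowPath_succ {p : ID × ℕ} {n : ℕ} :
    IsBelowPath h T p (n + 1) ↔ IsBelowPath h T p n ∧ lexKey p < lexKey (T n (h n p.1)) :=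
  Nat.forall_lt_succ_right

lemma IsBelowPath.mono {T' : ℕ → Idx → ID × ℕ} {p : ID × ℕ} {n : ℕ}
    (hp : IsBelowPath h T p n) (hTT' : ∀ r j, lexKey (T r j) ≤ lexKey (T' r j)) :
    IsBelowPath h T' p n :=
  fun r hr => (hp r hr).trans_le (hTT' r _)

lemma IsBelowPath.congr {T' : ℕ → Idx → ID × ℕ} {p : ID × ℕ} {n : ℕ}
    (hp : IsBelowPath h T p n) (hTT' : ∀ r < n, T' r = T r) :
    IsBelowPath h T' p n :=
  fun r hr => hTT' r hr ▸ hp r hr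

lemma pathSorted_of_count_eq_zero (hT : ∀ i j, (T i j).2 = 0) : PathSorted h T :=
  fun m j hpos => absurd (hT m j) hpos.ne'

lemma PathSorted.apply_ne_of_lt (hT : PathSorted h T) {i₁ i₂ : ℕ} {j₁ j₂ : Idx}
    (hlt : i₁ < i₂) (hpos : 0 < (T i₂ j₂).2) : T i₁ j₁ ≠ T i₂ j₂ := by
  intro heq
  obtain ⟨-, hbelow⟩ := hT i₂ j₂ hpos
  obtain ⟨hj₁, -⟩ := hT i₁ j₁ (heq ▸ hpos)
  have hself := hbelow i₁ hlt
  rw [← heq, ← hj₁] at hself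
  exact lt_irrefl _ hself

lemma PathSorted.eq_of_apply_eq (hT : PathSorted h T) {i₁ i₂ : ℕ} {j₁ j₂ : Idx}
    (hpos : 0 < (T i₁ j₁).2) (heq : T i₁ j₁ = T i₂ j₂) : (i₁, j₁) = (i₂, j₂) := by
  rcases lt_trichotomy i₁ i₂ with hlt | rfl | hgt
  · exact absurd heq (hT.apply_ne_of_lt hlt (heq ▸ hpos))
  · obtain ⟨hj₁, -⟩ := hT i₁ j₁ hpos
    obtain ⟨hj₂, -⟩ := hT i₁ j₂ (heq ▸ hpos)
    rw [hj₁, hj₂, heq]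
  · exact absurd heq.symm (hT.apply_ne_of_lt hgt hpos)

variable [DecidableEq Idx] {n : ℕ} {p : ID × ℕ}

lemma PathSorted.writeAt_of_lt (hT : PathSorted h T) (hlt : lexKey (T n (h n p.1)) < lexKey p)
    (hp : 0 < p.2 → IsBelowPath h T p n) : PathSorted h (writeAt T n (h n p.1) p) := by
  intro m j hpos
  by_cases hmj : m = n ∧ j = h n p.1
  · obtain ⟨rfl, rfl⟩ := hmj
    rw [writeAt_self] at hpos ⊢
    exact ⟨rfl, (hp hpos).congr fun r hr => writeAt_of_ne hr.ne⟩
  · have hentry : writeAt T n (h n p.1) p m j = T m j := if_neg hmj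
    rw [hentry] at hpos ⊢
    obtain ⟨hj, hbelow⟩ := hT m j hpos
    exact ⟨hj, hbelow.mono (lexKey_le_writeAt hlt)⟩

lemma PathSorted.isBelowPath_evicted (hT : PathSorted h T)
    (hlt : lexKey (T n (h n p.1)) < lexKey p) (hpos : 0 < (T n (h n p.1)).2) :
    IsBelowPath h (writeAt T n (h n p.1) p) (T n (h n p.1)) (n + 1) := by
  obtain ⟨hslot, hbelow⟩ := hT n _ hpos
  refine isBelowPath_succ.mpr ⟨hbelow.mono (lexKey_le_writeAt hlt), ?_⟩
  rwa [← hslot, writeAt_self]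

lemma RunInvariant.step {st : (ℕ → Idx → ID × ℕ) × Option (ID × ℕ)}
    (hst : RunInvariant h n st) : RunInvariant h (n + 1) (lexStep h n st) := by
  obtain ⟨T, _ | p⟩ := st
  · exact ⟨hst.1, by simp [lexStep]⟩
  obtain ⟨hT, hp⟩ := hst
  replace hp : 0 < p.2 → IsBelowPath h T p n := hp p rfl
  rw [lexStep_some]
  split_ifs with hlt heq
  · refine ⟨hT.writeAt_of_lt hlt hp, fun q hq hpos => ?_⟩
    obtain rfl := Option.some_injective _ hq
    exact hT.isBelowPath_evicted hlt hpos
  · exact ⟨hT, by simp⟩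
  · refine ⟨hT, fun q hq hpos => ?_⟩
    obtain rfl := Option.some_injective _ hq
    have hgt : lexKey p < lexKey (T n (h n p.1)) :=
      (not_lt.mp hlt).lt_of_ne fun hk => heq (lexKey_injective hk).symm
    exact isBelowPath_succ.mpr ⟨hp hpos, hgt⟩

lemma PathSorted.runInvariant_lexRun (hT : PathSorted h T) (p : ID × ℕ) (n : ℕ) :
    RunInvariant h n (lexRun h T p n) := by
  induction n with
  | zero => exact ⟨hT, fun _ _ _ r hr => absurd hr r.not_lt_zero⟩
  | succ n ih => exact ih.step

lemma PathSorted.lexTableAfter (d : ℕ) (hT : PathSorted h T) (l : List (ID × ℕ)) :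
    PathSorted h (lexTableAfter h d T l) := by
  induction l generalizing T with
  | nil => exact hT
  | cons p l ih => exact ih (hT.runInvariant_lexRun p d).1

end PathInvariant

theorem no_duplicate_pairs_general {ID Idx : Type} [LinearOrder ID] [DecidableEq Idx]
    (h : ℕ → ID → Idx) (d : ℕ) (T₀ : ℕ → Idx → ID × ℕ)
    (hT₀ : ∀ i j, (T₀ i j).2 = 0) (l : List (ID × ℕ))
    (i₁ i₂ : ℕ) (j₁ j₂ : Idx)
    (hne : (i₁, j₁) ≠ (i₂, j₂))
    (hpos₁ : 0 < ((lexTableAfter h d T₀ l) i₁ j₁).2) :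
    (lexTableAfter h d T₀ l) i₁ j₁ ≠ (lexTableAfter h d T₀ l) i₂ j₂ :=
  fun heq => hne <|
    ((pathSorted_of_count_eq_zero hT₀).lexTableAfter d l).eq_of_apply_eq hpos₁ heq

/-- starting from an all-zero table, after processing any finite packet
sequence, no `(ID, count)` pair with positive count appears in two distinct positions
of the table. -/
theorem no_duplicate_pairs {ID Idx : Type} [LinearOrder ID] [DecidableEq Idx]
    (h : ℕ → ID → Idx) (d : ℕ) (T₀ : ℕ → Idx → ID × ℕ)
    (hT₀ : ∀ i j, (T₀ i j).2 = 0) (l : List (ID × ℕ))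
    (i₁ i₂ : ℕ) (hi₁ : i₁ < d) (hi₂ : i₂ < d) (j₁ j₂ : Idx)
    (hne : (i₁, j₁) ≠ (i₂, j₂))
    (hpos₁ : 0 < ((lexTableAfter h d T₀ l) i₁ j₁).2)
    (hpos₂ : 0 < ((lexTableAfter h d T₀ l) i₂ j₂).2) :
    (lexTableAfter h d T₀ l) i₁ j₁ ≠ (lexTableAfter h d T₀ l) i₂ j₂ :=
  no_duplicate_pairs_general h d T₀ hT₀ l i₁ i₂ j₁ j₂ hne hpos₁
end

section
/- Two switches that process the same multiset of packets (in possibly different orders) through the pipeline insertion process, using identical hash functions and starting from identical all-zero tables, end up with identical tables. -/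
section LexPipeline

variable {ID Idx : Type} [LinearOrder ID] [DecidableEq Idx]

/-! ### Auxiliary development -/

/-- The strict lexicographic order on `(count, ID)` pairs used by the pipeline. -/
def ltt (s p : ID × ℕ) : Prop := s.2 < p.2 ∨ (s.2 = p.2 ∧ s.1 < p.1)

lemma ltt_irrefl (p : ID × ℕ) : ¬ ltt p p := by
  simp [ltt]

lemma ltt_asymm {s p : ID × ℕ} (hsp : ltt s p) : ¬ ltt p s := by
  rcases hsp with h | ⟨h1, h2⟩
  · rintro (h' | ⟨h1', h2'⟩) <;> omega
  · rintro (h' | ⟨h1', h2'⟩)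
    · omega
    · exact absurd h2' (not_lt_of_gt h2)

lemma ltt_trans {s p q : ID × ℕ} (h1 : ltt s p) (h2 : ltt p q) : ltt s q := by
  rcases h1 with h1 | ⟨h1, h1'⟩ <;> rcases h2 with h2 | ⟨h2, h2'⟩
  · exact Or.inl (lt_trans h1 h2)
  · exact Or.inl (h2 ▸ h1)
  · exact Or.inl (h1 ▸ h2)
  · exact Or.inr ⟨h1.trans h2, lt_trans h1' h2'⟩

lemma ltt_trichot (s p : ID × ℕ) : ltt s p ∨ s = p ∨ ltt p s := by
  rcases lt_trichotomy s.2 p.2 with h | h | h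
  · exact Or.inl (Or.inl h)
  · rcases lt_trichotomy s.1 p.1 with h' | h' | h'
    · exact Or.inl (Or.inr ⟨h, h'⟩)
    · exact Or.inr (Or.inl (Prod.ext h' h))
    · exact Or.inr (Or.inr (Or.inr ⟨h.symm, h'⟩))
  · exact Or.inr (Or.inr (Or.inl h))

/-- Write value `v` at position `(m, c)` of a table. -/
def wrt (m : ℕ) (c : Idx) (v : ID × ℕ) (T : ℕ → Idx → ID × ℕ) : ℕ → Idx → ID × ℕ :=
  fun i j => if i = m ∧ j = c then v else T i j

lemma wrt_read_same (m : ℕ) (c : Idx) (v : ID × ℕ) (T : ℕ → Idx → ID × ℕ) :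
    wrt m c v T m c = v := by simp [wrt]

lemma wrt_read_ne_row {m i : ℕ} (hi : i ≠ m) (c : Idx) (v : ID × ℕ)
    (T : ℕ → Idx → ID × ℕ) (j : Idx) : wrt m c v T i j = T i j := by
  simp [wrt, hi]

lemma wrt_read_ne_col {c j : Idx} (hj : j ≠ c) (m i : ℕ) (v : ID × ℕ)
    (T : ℕ → Idx → ID × ℕ) : wrt m c v T i j = T i j := by
  simp [wrt, hj]

lemma wrt_wrt_same (m : ℕ) (c : Idx) (v w : ID × ℕ) (T : ℕ → Idx → ID × ℕ) :
    wrt m c v (wrt m c w T) = wrt m c v T := by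
  funext i j; simp only [wrt]; split <;> rfl

lemma wrt_wrt_comm {c c' : Idx} (hcc : c ≠ c') (m : ℕ) (v w : ID × ℕ)
    (T : ℕ → Idx → ID × ℕ) :
    wrt m c v (wrt m c' w T) = wrt m c' w (wrt m c v T) := by
  funext i j
  simp only [wrt]
  split_ifs with h1 h2 h2 <;> try rfl
  exact absurd (h1.2.symm.trans h2.2) hcc

lemma wrt_comm_row {m n : ℕ} (hm : m ≠ n) (c c' : Idx) (v w : ID × ℕ)
    (T : ℕ → Idx → ID × ℕ) :
    wrt n c' w (wrt m c v T) = wrt m c v (wrt n c' w T) := by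
  funext i j
  simp only [wrt]
  split_ifs with h1 h2 h2 <;> try rfl
  exact absurd (h1.1.symm.trans h2.1) (Ne.symm hm)

lemma ltt_ne {s p : ID × ℕ} (hc : ltt s p) : s ≠ p :=
  fun he => ltt_irrefl p (he ▸ hc)

lemma ltt_ne' {s p : ID × ℕ} (hc : ltt s p) : p ≠ s :=
  fun he => (ltt_ne hc) he.symm

lemma ltt_ne_fix {s p : ID × ℕ} (hc : ltt s p) : s ≠ p := by
  intro he; rw [he] at hc; exact ltt_irrefl p hc

/-- `lexStep` in the three interesting cases. -/
lemma step_none (h : ℕ → ID → Idx) (n : ℕ) (T : ℕ → Idx → ID × ℕ) :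
    lexStep h n (T, none) = (T, none) := rfl

lemma step_lt {h : ℕ → ID → Idx} {n : ℕ} {T : ℕ → Idx → ID × ℕ} {p : ID × ℕ}
    (hc : ltt (T n (h n p.1)) p) :
    lexStep h n (T, some p) = (wrt n (h n p.1) p T, some (T n (h n p.1))) := by
  have hc' : (T n (h n p.1)).2 < p.2 ∨
      ((T n (h n p.1)).2 = p.2 ∧ (T n (h n p.1)).1 < p.1) := hc
  simp only [lexStep]
  rw [if_pos hc']
  rfl

lemma step_eq {h : ℕ → ID → Idx} {n : ℕ} {T : ℕ → Idx → ID × ℕ} {p : ID × ℕ}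
    (hc : T n (h n p.1) = p) :
    lexStep h n (T, some p) = (T, none) := by
  have hn : ¬ ltt (T n (h n p.1)) p := by rw [hc]; exact ltt_irrefl p
  have hn' : ¬ ((T n (h n p.1)).2 < p.2 ∨
      ((T n (h n p.1)).2 = p.2 ∧ (T n (h n p.1)).1 < p.1)) := hn
  simp only [lexStep]
  rw [if_neg hn', if_pos hc]

lemma step_gt {h : ℕ → ID → Idx} {n : ℕ} {T : ℕ → Idx → ID × ℕ} {p : ID × ℕ}
    (h1 : ¬ ltt (T n (h n p.1)) p) (h2 : T n (h n p.1) ≠ p) :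
    lexStep h n (T, some p) = (T, some p) := by
  have h1' : ¬ ((T n (h n p.1)).2 < p.2 ∨
      ((T n (h n p.1)).2 = p.2 ∧ (T n (h n p.1)).1 < p.1)) := h1
  simp only [lexStep]
  rw [if_neg h1', if_neg h2]

lemma step_frame {h : ℕ → ID → Idx} {n : ℕ}
    (st : (ℕ → Idx → ID × ℕ) × Option (ID × ℕ)) {i : ℕ} (hi : i ≠ n) (j : Idx) :
    (lexStep h n st).1 i j = st.1 i j := by
  obtain ⟨T, o⟩ := st
  cases o with
  | none => rfl
  | some p =>
    simp only [lexStep]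
    split
    · simp [hi]
    · split <;> rfl

/-- Run the pipeline starting at stage `n` for `k` stages. -/
def runSeg (h : ℕ → ID → Idx) : ℕ → ℕ → ((ℕ → Idx → ID × ℕ) × Option (ID × ℕ)) →
    ((ℕ → Idx → ID × ℕ) × Option (ID × ℕ))
  | _, 0, st => st
  | n, k + 1, st => runSeg h (n + 1) k (lexStep h n st)

lemma runSeg_succ_last (h : ℕ → ID → Idx) :
    ∀ (k n : ℕ) (st : (ℕ → Idx → ID × ℕ) × Option (ID × ℕ)),
      runSeg h n (k + 1) st = lexStep h (n + k) (runSeg h n k st) := by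
  intro k
  induction k with
  | zero => intro n st; simp [runSeg]
  | succ k ih =>
    intro n st
    show runSeg h (n + 1) (k + 1) (lexStep h n st) = _
    rw [ih (n + 1) (lexStep h n st)]
    have : n + 1 + k = n + (k + 1) := by omega
    rw [this]
    rfl

lemma lexRun_eq_runSeg (h : ℕ → ID → Idx) (T : ℕ → Idx → ID × ℕ) (p : ID × ℕ) :
    ∀ d, lexRun h T p d = runSeg h 0 d (T, some p) := by
  intro d
  induction d with
  | zero => rfl
  | succ d ih =>
    show lexStep h d (lexRun h T p d) = _
    rw [ih, runSeg_succ_last]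
    norm_num

lemma runSeg_none (h : ℕ → ID → Idx) :
    ∀ (k n : ℕ) (T : ℕ → Idx → ID × ℕ), runSeg h n k (T, none) = (T, none) := by
  intro k
  induction k with
  | zero => intro n T; rfl
  | succ k ih => intro n T; show runSeg h (n+1) k (lexStep h n (T, none)) = _;
                 rw [step_none]; exact ih _ _

lemma runSeg_frame (h : ℕ → ID → Idx) :
    ∀ (k n : ℕ) (st : (ℕ → Idx → ID × ℕ) × Option (ID × ℕ)) (i : ℕ), i < n →
      ∀ j, (runSeg h n k st).1 i j = st.1 i j := by
  intro k
  induction k with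
  | zero => intro n st i _ j; rfl
  | succ k ih =>
    intro n st i hi j
    show (runSeg h (n+1) k (lexStep h n st)).1 i j = _
    rw [ih (n+1) _ i (by omega) j, step_frame st (by omega) j]

lemma step_wrt_comm {h : ℕ → ID → Idx} {n m : ℕ} (hm : m ≠ n) (c : Idx)
    (v : ID × ℕ) (T : ℕ → Idx → ID × ℕ) (o : Option (ID × ℕ)) :
    lexStep h n (wrt m c v T, o)
      = (wrt m c v (lexStep h n (T, o)).1, (lexStep h n (T, o)).2) := by
  cases o with
  | none => rfl
  | some p =>
    have hread : wrt m c v T n (h n p.1) = T n (h n p.1) :=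
      wrt_read_ne_row (Ne.symm hm) c v T _
    rcases ltt_trichot (T n (h n p.1)) p with hc | hc | hc
    · rw [step_lt (by rw [hread]; exact hc), step_lt hc]
      simp only [hread]
      congr 1
      exact wrt_comm_row hm c (h n p.1) v p T
    · rw [step_eq (by rw [hread]; exact hc), step_eq hc]
    · rw [step_gt (by rw [hread]; exact ltt_asymm hc)
          (by rw [hread]; exact (ltt_ne_fix hc).symm),
        step_gt (ltt_asymm hc) (ltt_ne_fix hc).symm]

lemma runSeg_wrt_comm (h : ℕ → ID → Idx) :
    ∀ (k n m : ℕ), m < n → ∀ (c : Idx) (v : ID × ℕ) (T : ℕ → Idx → ID × ℕ)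
      (o : Option (ID × ℕ)),
      runSeg h n k (wrt m c v T, o)
        = (wrt m c v (runSeg h n k (T, o)).1, (runSeg h n k (T, o)).2) := by
  intro k
  induction k with
  | zero => intro n m _ c v T o; rfl
  | succ k ih =>
    intro n m hm c v T o
    show runSeg h (n+1) k (lexStep h n (wrt m c v T, o)) = _
    rw [step_wrt_comm (by omega) c v T o]
    rw [ih (n+1) m (by omega) c v (lexStep h n (T, o)).1 (lexStep h n (T, o)).2]
    show _ = (wrt m c v (runSeg h (n+1) k (lexStep h n (T, o))).1,
              (runSeg h (n+1) k (lexStep h n (T, o))).2)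
    rw [Prod.mk.eta]

/-- Final table of a run starting at stage `n` for `k` stages. -/
def insF (h : ℕ → ID → Idx) (n k : ℕ) (T : ℕ → Idx → ID × ℕ)
    (o : Option (ID × ℕ)) : ℕ → Idx → ID × ℕ :=
  (runSeg h n k (T, o)).1

lemma insF_none (h : ℕ → ID → Idx) (n k : ℕ) (T : ℕ → Idx → ID × ℕ) :
    insF h n k T none = T := by
  unfold insF; rw [runSeg_none]

lemma insF_frame (h : ℕ → ID → Idx) {n k : ℕ} (T : ℕ → Idx → ID × ℕ)
    (o : Option (ID × ℕ)) {i : ℕ} (hi : i < n) (j : Idx) :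
    insF h n k T o i j = T i j :=
  runSeg_frame h k n (T, o) i hi j

lemma insF_read_top (h : ℕ → ID → Idx) {n k : ℕ} (T : ℕ → Idx → ID × ℕ)
    (o : Option (ID × ℕ)) (j : Idx) :
    insF h (n + 1) k T o n j = T n j :=
  insF_frame h T o (Nat.lt_succ_self n) j

lemma insF_wrt_comm (h : ℕ → ID → Idx) {n k m : ℕ} (hm : m < n) (c : Idx)
    (v : ID × ℕ) (T : ℕ → Idx → ID × ℕ) (o : Option (ID × ℕ)) :
    insF h n k (wrt m c v T) o = wrt m c v (insF h n k T o) := by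
  unfold insF; rw [runSeg_wrt_comm h k n m hm c v T o]

lemma insF_succ_lt {h : ℕ → ID → Idx} {n k : ℕ} {T : ℕ → Idx → ID × ℕ} {p : ID × ℕ}
    (hc : ltt (T n (h n p.1)) p) :
    insF h n (k + 1) T (some p)
      = insF h (n + 1) k (wrt n (h n p.1) p T) (some (T n (h n p.1))) := by
  show (runSeg h (n+1) k (lexStep h n (T, some p))).1 = _
  rw [step_lt hc]; rfl

lemma insF_succ_eq {h : ℕ → ID → Idx} {n k : ℕ} {T : ℕ → Idx → ID × ℕ} {p : ID × ℕ}
    (hc : T n (h n p.1) = p) :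
    insF h n (k + 1) T (some p) = T := by
  show (runSeg h (n+1) k (lexStep h n (T, some p))).1 = _
  rw [step_eq hc, runSeg_none]

lemma insF_succ_gt {h : ℕ → ID → Idx} {n k : ℕ} {T : ℕ → Idx → ID × ℕ} {p : ID × ℕ}
    (h1 : ¬ ltt (T n (h n p.1)) p) (h2 : T n (h n p.1) ≠ p) :
    insF h n (k + 1) T (some p) = insF h (n + 1) k T (some p) := by
  show (runSeg h (n+1) k (lexStep h n (T, some p))).1 = _
  rw [step_gt h1 h2]; rfl

/-- Variants taking an explicit value for the read of the relevant cell. -/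
lemma insF_succ_lt2 {h : ℕ → ID → Idx} {n k : ℕ} {S : ℕ → Idx → ID × ℕ}
    {q w : ID × ℕ} (hval : S n (h n q.1) = w) (hc : ltt w q) :
    insF h n (k + 1) S (some q) = insF h (n + 1) k (wrt n (h n q.1) q S) (some w) := by
  subst hval; exact insF_succ_lt hc

lemma insF_succ_gt2 {h : ℕ → ID → Idx} {n k : ℕ} {S : ℕ → Idx → ID × ℕ}
    {q w : ID × ℕ} (hval : S n (h n q.1) = w) (h1 : ¬ ltt w q) (h2 : w ≠ q) :
    insF h n (k + 1) S (some q) = insF h (n + 1) k S (some q) := by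
  subst hval; exact insF_succ_gt h1 h2

/-- Idempotence: inserting the same packet twice is the same as once. -/
lemma insF_idem (h : ℕ → ID → Idx) :
    ∀ (k n : ℕ) (T : ℕ → Idx → ID × ℕ) (p : ID × ℕ),
      insF h n k (insF h n k T (some p)) (some p) = insF h n k T (some p) := by
  intro k
  induction k with
  | zero => intro n T p; rfl
  | succ k ih =>
    intro n T p
    rcases ltt_trichot (T n (h n p.1)) p with hc | hc | hc
    · rw [insF_succ_lt hc]
      exact insF_succ_eq (by rw [insF_read_top, wrt_read_same])
    · rw [insF_succ_eq hc, insF_succ_eq hc]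
    · have h1 : ¬ ltt (T n (h n p.1)) p := ltt_asymm hc
      have h2 : T n (h n p.1) ≠ p := (ltt_ne_fix hc).symm
      rw [insF_succ_gt h1 h2]
      calc insF h n (k + 1) (insF h (n + 1) k T (some p)) (some p)
          = insF h (n + 1) k (insF h (n + 1) k T (some p)) (some p) :=
            insF_succ_gt2 (by rw [insF_read_top]) h1 h2
        _ = insF h (n + 1) k T (some p) := ih (n + 1) T p

/-- Commutativity: inserting two packets in either order gives the same table. -/
lemma insF_comm (h : ℕ → ID → Idx) :
    ∀ (k n : ℕ) (T : ℕ → Idx → ID × ℕ) (o₁ o₂ : Option (ID × ℕ)),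
      insF h n k (insF h n k T o₁) o₂ = insF h n k (insF h n k T o₂) o₁ := by
  intro k
  induction k with
  | zero => intro n T o₁ o₂; rfl
  | succ k ih =>
    intro n T o₁ o₂
    cases o₁ with
    | none => rw [insF_none, insF_none]
    | some p =>
      cases o₂ with
      | none => rw [insF_none, insF_none]
      | some q =>
        by_cases hpq : p = q
        · subst hpq; rfl
        have hqp : q ≠ p := fun he => hpq he.symm
        by_cases hab : h n p.1 = h n q.1
        · -- same cell at stage n
          have hTT : T n (h n q.1) = T n (h n p.1) := by rw [hab]
          rcases ltt_trichot (T n (h n p.1)) p with hp | hp | hp <;>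
            rcases ltt_trichot (T n (h n q.1)) q with hq | hq | hq
          · -- both bigger than cell
            have hq' : ltt (T n (h n p.1)) q := hTT ▸ hq
            rcases ltt_trichot p q with hpq' | hpq'' | hpq'
            · -- p < q
              calc insF h n (k+1) (insF h n (k+1) T (some p)) (some q)
                  = insF h n (k+1)
                      (insF h (n+1) k (wrt n (h n p.1) p T) (some (T n (h n p.1))))
                      (some q) := by rw [insF_succ_lt hp]
                _ = insF h (n+1) k
                      (wrt n (h n q.1) q
                        (insF h (n+1) k (wrt n (h n p.1) p T) (some (T n (h n p.1)))))
                      (some p) :=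
                    insF_succ_lt2
                      (by rw [insF_read_top, ← hab, wrt_read_same]) hpq'
                _ = insF h (n+1) k
                      (insF h (n+1) k (wrt n (h n q.1) q (wrt n (h n p.1) p T))
                        (some (T n (h n p.1)))) (some p) := by
                    simp only [insF_wrt_comm h (Nat.lt_succ_self n)]
                _ = insF h (n+1) k
                      (insF h (n+1) k (wrt n (h n q.1) q T) (some (T n (h n q.1))))
                      (some p) := by rw [hab, wrt_wrt_same, hTT]
                _ = insF h n (k+1)
                      (insF h (n+1) k (wrt n (h n q.1) q T) (some (T n (h n q.1))))
                      (some p) :=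
                    (insF_succ_gt2 (by rw [insF_read_top, hab, wrt_read_same])
                      (ltt_asymm hpq') hqp).symm
                _ = insF h n (k+1) (insF h n (k+1) T (some q)) (some p) := by
                    rw [insF_succ_lt hq]
            · exact absurd hpq'' hpq
            · -- q < p
              calc insF h n (k+1) (insF h n (k+1) T (some p)) (some q)
                  = insF h n (k+1)
                      (insF h (n+1) k (wrt n (h n p.1) p T) (some (T n (h n p.1))))
                      (some q) := by rw [insF_succ_lt hp]
                _ = insF h (n+1) k
                      (insF h (n+1) k (wrt n (h n p.1) p T) (some (T n (h n p.1))))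
                      (some q) :=
                    insF_succ_gt2 (by rw [insF_read_top, ← hab, wrt_read_same])
                      (ltt_asymm hpq') hpq
                _ = insF h (n+1) k
                      (insF h (n+1) k (wrt n (h n p.1) p (wrt n (h n q.1) q T))
                        (some (T n (h n q.1)))) (some q) := by
                    rw [hab, wrt_wrt_same, hTT]
                _ = insF h (n+1) k
                      (wrt n (h n p.1) p
                        (insF h (n+1) k (wrt n (h n q.1) q T) (some (T n (h n q.1)))))
                      (some q) := by simp only [insF_wrt_comm h (Nat.lt_succ_self n)]
                _ = insF h n (k+1)
                      (insF h (n+1) k (wrt n (h n q.1) q T) (some (T n (h n q.1))))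
                      (some p) :=
                    (insF_succ_lt2 (by rw [insF_read_top, hab, wrt_read_same])
                      hpq').symm
                _ = insF h n (k+1) (insF h n (k+1) T (some q)) (some p) := by
                    rw [insF_succ_lt hq]
          · -- ltt cell p, cell = q
            have hs : T n (h n p.1) = q := by rw [hab, hq]
            have hqp' : ltt q p := hs ▸ hp
            calc insF h n (k+1) (insF h n (k+1) T (some p)) (some q)
                = insF h n (k+1)
                    (insF h (n+1) k (wrt n (h n p.1) p T) (some (T n (h n p.1))))
                    (some q) := by rw [insF_succ_lt hp]
              _ = insF h (n+1) k
                    (insF h (n+1) k (wrt n (h n p.1) p T) (some (T n (h n p.1))))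
                    (some q) :=
                  insF_succ_gt2 (by rw [insF_read_top, ← hab, wrt_read_same])
                    (ltt_asymm hqp') hpq
              _ = insF h (n+1) k
                    (insF h (n+1) k (wrt n (h n p.1) p T) (some q)) (some q) := by
                  rw [hs]
              _ = insF h (n+1) k (wrt n (h n p.1) p T) (some q) :=
                  insF_idem h k (n+1) _ q
              _ = insF h (n+1) k (wrt n (h n p.1) p T) (some (T n (h n p.1))) := by
                  rw [hs]
              _ = insF h n (k+1) T (some p) := (insF_succ_lt hp).symm
              _ = insF h n (k+1) (insF h n (k+1) T (some q)) (some p) := by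
                  rw [insF_succ_eq hq]
          · -- ltt cell p, ltt q cell
            have hq2 : ltt q (T n (h n p.1)) := hTT ▸ hq
            have hqp' : ltt q p := ltt_trans hq2 hp
            calc insF h n (k+1) (insF h n (k+1) T (some p)) (some q)
                = insF h n (k+1)
                    (insF h (n+1) k (wrt n (h n p.1) p T) (some (T n (h n p.1))))
                    (some q) := by rw [insF_succ_lt hp]
              _ = insF h (n+1) k
                    (insF h (n+1) k (wrt n (h n p.1) p T) (some (T n (h n p.1))))
                    (some q) :=
                  insF_succ_gt2 (by rw [insF_read_top, ← hab, wrt_read_same])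
                    (ltt_asymm hqp') hpq
              _ = insF h (n+1) k
                    (insF h (n+1) k (wrt n (h n p.1) p T) (some q))
                    (some (T n (h n p.1))) :=
                  ih (n+1) _ (some (T n (h n p.1))) (some q)
              _ = insF h (n+1) k
                    (wrt n (h n p.1) p (insF h (n+1) k T (some q)))
                    (some (T n (h n p.1))) := by
                  simp only [insF_wrt_comm h (Nat.lt_succ_self n)]
              _ = insF h n (k+1) (insF h (n+1) k T (some q)) (some p) :=
                  (insF_succ_lt2 (by rw [insF_read_top]) hp).symm
              _ = insF h n (k+1) (insF h n (k+1) T (some q)) (some p) := by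
                  rw [insF_succ_gt (ltt_asymm hq) (ltt_ne_fix hq).symm]
          · -- cell = p, ltt cell q
            have ht : T n (h n q.1) = p := by rw [hTT, hp]
            have hpq' : ltt p q := ht ▸ hq
            calc insF h n (k+1) (insF h n (k+1) T (some p)) (some q)
                = insF h n (k+1) T (some q) := by rw [insF_succ_eq hp]
              _ = insF h (n+1) k (wrt n (h n q.1) q T) (some (T n (h n q.1))) :=
                  insF_succ_lt hq
              _ = insF h (n+1) k (wrt n (h n q.1) q T) (some p) := by rw [ht]
              _ = insF h (n+1) k
                    (insF h (n+1) k (wrt n (h n q.1) q T) (some p)) (some p) :=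
                  (insF_idem h k (n+1) _ p).symm
              _ = insF h (n+1) k
                    (insF h (n+1) k (wrt n (h n q.1) q T) (some (T n (h n q.1))))
                    (some p) := by rw [ht]
              _ = insF h n (k+1)
                    (insF h (n+1) k (wrt n (h n q.1) q T) (some (T n (h n q.1))))
                    (some p) :=
                  (insF_succ_gt2 (by rw [insF_read_top, hab, wrt_read_same])
                    (ltt_asymm hpq') hqp).symm
              _ = insF h n (k+1) (insF h n (k+1) T (some q)) (some p) := by
                  rw [insF_succ_lt hq]
          · -- cell = p and cell = q : contradiction
            exact absurd (by rw [← hp, hab, hq]) hpq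
          · -- cell = p, ltt q cell
            calc insF h n (k+1) (insF h n (k+1) T (some p)) (some q)
                = insF h n (k+1) T (some q) := by rw [insF_succ_eq hp]
              _ = insF h (n+1) k T (some q) :=
                  insF_succ_gt (ltt_asymm hq) (ltt_ne_fix hq).symm
              _ = insF h n (k+1) (insF h (n+1) k T (some q)) (some p) :=
                  (insF_succ_eq (by rw [insF_read_top, hp])).symm
              _ = insF h n (k+1) (insF h n (k+1) T (some q)) (some p) := by
                  rw [insF_succ_gt (ltt_asymm hq) (ltt_ne_fix hq).symm]
          · -- ltt p cell, ltt cell q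
            have hp2 : ltt p (T n (h n q.1)) := hTT.symm ▸ hp
            have hpq' : ltt p q := ltt_trans hp2 hq
            calc insF h n (k+1) (insF h n (k+1) T (some p)) (some q)
                = insF h n (k+1) (insF h (n+1) k T (some p)) (some q) := by
                  rw [insF_succ_gt (ltt_asymm hp) (ltt_ne_fix hp).symm]
              _ = insF h (n+1) k
                    (wrt n (h n q.1) q (insF h (n+1) k T (some p)))
                    (some (T n (h n q.1))) :=
                  insF_succ_lt2 (by rw [insF_read_top]) hq
              _ = insF h (n+1) k
                    (insF h (n+1) k (wrt n (h n q.1) q T) (some p))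
                    (some (T n (h n q.1))) := by
                  simp only [insF_wrt_comm h (Nat.lt_succ_self n)]
              _ = insF h (n+1) k
                    (insF h (n+1) k (wrt n (h n q.1) q T) (some (T n (h n q.1))))
                    (some p) :=
                  ih (n+1) _ (some p) (some (T n (h n q.1)))
              _ = insF h n (k+1)
                    (insF h (n+1) k (wrt n (h n q.1) q T) (some (T n (h n q.1))))
                    (some p) :=
                  (insF_succ_gt2 (by rw [insF_read_top, hab, wrt_read_same])
                    (ltt_asymm hpq') hqp).symm
              _ = insF h n (k+1) (insF h n (k+1) T (some q)) (some p) := by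
                  rw [insF_succ_lt hq]
          · -- ltt p cell, cell = q
            calc insF h n (k+1) (insF h n (k+1) T (some p)) (some q)
                = insF h n (k+1) (insF h (n+1) k T (some p)) (some q) := by
                  rw [insF_succ_gt (ltt_asymm hp) (ltt_ne_fix hp).symm]
              _ = insF h (n+1) k T (some p) :=
                  insF_succ_eq (by rw [insF_read_top, hq])
              _ = insF h n (k+1) T (some p) :=
                  (insF_succ_gt (ltt_asymm hp) (ltt_ne_fix hp).symm).symm
              _ = insF h n (k+1) (insF h n (k+1) T (some q)) (some p) := by
                  rw [insF_succ_eq hq]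
          · -- both pass
            calc insF h n (k+1) (insF h n (k+1) T (some p)) (some q)
                = insF h n (k+1) (insF h (n+1) k T (some p)) (some q) := by
                  rw [insF_succ_gt (ltt_asymm hp) (ltt_ne_fix hp).symm]
              _ = insF h (n+1) k (insF h (n+1) k T (some p)) (some q) :=
                  insF_succ_gt2 (by rw [insF_read_top]) (ltt_asymm hq)
                    (ltt_ne_fix hq).symm
              _ = insF h (n+1) k (insF h (n+1) k T (some q)) (some p) :=
                  ih (n+1) T (some p) (some q)
              _ = insF h n (k+1) (insF h (n+1) k T (some q)) (some p) :=
                  (insF_succ_gt2 (by rw [insF_read_top]) (ltt_asymm hp)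
                    (ltt_ne_fix hp).symm).symm
              _ = insF h n (k+1) (insF h n (k+1) T (some q)) (some p) := by
                  rw [insF_succ_gt (ltt_asymm hq) (ltt_ne_fix hq).symm]
        · -- different cells at stage n
          have hba : h n q.1 ≠ h n p.1 := Ne.symm hab
          rcases ltt_trichot (T n (h n p.1)) p with hp | hp | hp <;>
            rcases ltt_trichot (T n (h n q.1)) q with hq | hq | hq
          · -- both write
            calc insF h n (k+1) (insF h n (k+1) T (some p)) (some q)
                = insF h n (k+1)
                    (insF h (n+1) k (wrt n (h n p.1) p T) (some (T n (h n p.1))))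
                    (some q) := by rw [insF_succ_lt hp]
              _ = insF h (n+1) k
                    (wrt n (h n q.1) q
                      (insF h (n+1) k (wrt n (h n p.1) p T) (some (T n (h n p.1)))))
                    (some (T n (h n q.1))) :=
                  insF_succ_lt2
                    (by rw [insF_read_top, wrt_read_ne_col hba]) hq
              _ = insF h (n+1) k
                    (insF h (n+1) k (wrt n (h n q.1) q (wrt n (h n p.1) p T))
                      (some (T n (h n p.1)))) (some (T n (h n q.1))) := by
                  simp only [insF_wrt_comm h (Nat.lt_succ_self n)]
              _ = insF h (n+1) k
                    (insF h (n+1) k (wrt n (h n p.1) p (wrt n (h n q.1) q T))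
                      (some (T n (h n p.1)))) (some (T n (h n q.1))) := by
                  rw [wrt_wrt_comm hba]
              _ = insF h (n+1) k
                    (insF h (n+1) k (wrt n (h n p.1) p (wrt n (h n q.1) q T))
                      (some (T n (h n q.1)))) (some (T n (h n p.1))) :=
                  ih (n+1) _ (some (T n (h n p.1))) (some (T n (h n q.1)))
              _ = insF h (n+1) k
                    (wrt n (h n p.1) p
                      (insF h (n+1) k (wrt n (h n q.1) q T) (some (T n (h n q.1)))))
                    (some (T n (h n p.1))) := by
                  simp only [insF_wrt_comm h (Nat.lt_succ_self n)]
              _ = insF h n (k+1)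
                    (insF h (n+1) k (wrt n (h n q.1) q T) (some (T n (h n q.1))))
                    (some p) :=
                  (insF_succ_lt2
                    (by rw [insF_read_top, wrt_read_ne_col hab]) hp).symm
              _ = insF h n (k+1) (insF h n (k+1) T (some q)) (some p) := by
                  rw [insF_succ_lt hq]
          · -- p writes, q stops
            calc insF h n (k+1) (insF h n (k+1) T (some p)) (some q)
                = insF h n (k+1)
                    (insF h (n+1) k (wrt n (h n p.1) p T) (some (T n (h n p.1))))
                    (some q) := by rw [insF_succ_lt hp]
              _ = insF h (n+1) k (wrt n (h n p.1) p T) (some (T n (h n p.1))) :=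
                  insF_succ_eq (by rw [insF_read_top, wrt_read_ne_col hba, hq])
              _ = insF h n (k+1) T (some p) := (insF_succ_lt hp).symm
              _ = insF h n (k+1) (insF h n (k+1) T (some q)) (some p) := by
                  rw [insF_succ_eq hq]
          · -- p writes, q passes
            calc insF h n (k+1) (insF h n (k+1) T (some p)) (some q)
                = insF h n (k+1)
                    (insF h (n+1) k (wrt n (h n p.1) p T) (some (T n (h n p.1))))
                    (some q) := by rw [insF_succ_lt hp]
              _ = insF h (n+1) k
                    (insF h (n+1) k (wrt n (h n p.1) p T) (some (T n (h n p.1))))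
                    (some q) :=
                  insF_succ_gt2 (by rw [insF_read_top, wrt_read_ne_col hba])
                    (ltt_asymm hq) (ltt_ne_fix hq).symm
              _ = insF h (n+1) k
                    (insF h (n+1) k (wrt n (h n p.1) p T) (some q))
                    (some (T n (h n p.1))) :=
                  ih (n+1) _ (some (T n (h n p.1))) (some q)
              _ = insF h (n+1) k
                    (wrt n (h n p.1) p (insF h (n+1) k T (some q)))
                    (some (T n (h n p.1))) := by
                  simp only [insF_wrt_comm h (Nat.lt_succ_self n)]
              _ = insF h n (k+1) (insF h (n+1) k T (some q)) (some p) :=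
                  (insF_succ_lt2 (by rw [insF_read_top]) hp).symm
              _ = insF h n (k+1) (insF h n (k+1) T (some q)) (some p) := by
                  rw [insF_succ_gt (ltt_asymm hq) (ltt_ne_fix hq).symm]
          · -- p stops, q writes
            calc insF h n (k+1) (insF h n (k+1) T (some p)) (some q)
                = insF h n (k+1) T (some q) := by rw [insF_succ_eq hp]
              _ = insF h (n+1) k (wrt n (h n q.1) q T) (some (T n (h n q.1))) :=
                  insF_succ_lt hq
              _ = insF h n (k+1)
                    (insF h (n+1) k (wrt n (h n q.1) q T) (some (T n (h n q.1))))
                    (some p) :=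
                  (insF_succ_eq
                    (by rw [insF_read_top, wrt_read_ne_col hab, hp])).symm
              _ = insF h n (k+1) (insF h n (k+1) T (some q)) (some p) := by
                  rw [insF_succ_lt hq]
          · -- both stop
            calc insF h n (k+1) (insF h n (k+1) T (some p)) (some q)
                = insF h n (k+1) T (some q) := by rw [insF_succ_eq hp]
              _ = T := insF_succ_eq hq
              _ = insF h n (k+1) T (some p) := (insF_succ_eq hp).symm
              _ = insF h n (k+1) (insF h n (k+1) T (some q)) (some p) := by
                  rw [insF_succ_eq hq]
          · -- p stops, q passes
            calc insF h n (k+1) (insF h n (k+1) T (some p)) (some q)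
                = insF h n (k+1) T (some q) := by rw [insF_succ_eq hp]
              _ = insF h (n+1) k T (some q) :=
                  insF_succ_gt (ltt_asymm hq) (ltt_ne_fix hq).symm
              _ = insF h n (k+1) (insF h (n+1) k T (some q)) (some p) :=
                  (insF_succ_eq (by rw [insF_read_top, hp])).symm
              _ = insF h n (k+1) (insF h n (k+1) T (some q)) (some p) := by
                  rw [insF_succ_gt (ltt_asymm hq) (ltt_ne_fix hq).symm]
          · -- p passes, q writes
            calc insF h n (k+1) (insF h n (k+1) T (some p)) (some q)
                = insF h n (k+1) (insF h (n+1) k T (some p)) (some q) := by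
                  rw [insF_succ_gt (ltt_asymm hp) (ltt_ne_fix hp).symm]
              _ = insF h (n+1) k
                    (wrt n (h n q.1) q (insF h (n+1) k T (some p)))
                    (some (T n (h n q.1))) :=
                  insF_succ_lt2 (by rw [insF_read_top]) hq
              _ = insF h (n+1) k
                    (insF h (n+1) k (wrt n (h n q.1) q T) (some p))
                    (some (T n (h n q.1))) := by
                  simp only [insF_wrt_comm h (Nat.lt_succ_self n)]
              _ = insF h (n+1) k
                    (insF h (n+1) k (wrt n (h n q.1) q T) (some (T n (h n q.1))))
                    (some p) :=
                  ih (n+1) _ (some p) (some (T n (h n q.1)))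
              _ = insF h n (k+1)
                    (insF h (n+1) k (wrt n (h n q.1) q T) (some (T n (h n q.1))))
                    (some p) :=
                  (insF_succ_gt2 (by rw [insF_read_top, wrt_read_ne_col hab])
                    (ltt_asymm hp) (ltt_ne_fix hp).symm).symm
              _ = insF h n (k+1) (insF h n (k+1) T (some q)) (some p) := by
                  rw [insF_succ_lt hq]
          · -- p passes, q stops
            calc insF h n (k+1) (insF h n (k+1) T (some p)) (some q)
                = insF h n (k+1) (insF h (n+1) k T (some p)) (some q) := by
                  rw [insF_succ_gt (ltt_asymm hp) (ltt_ne_fix hp).symm]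
              _ = insF h (n+1) k T (some p) :=
                  insF_succ_eq (by rw [insF_read_top, hq])
              _ = insF h n (k+1) T (some p) :=
                  (insF_succ_gt (ltt_asymm hp) (ltt_ne_fix hp).symm).symm
              _ = insF h n (k+1) (insF h n (k+1) T (some q)) (some p) := by
                  rw [insF_succ_eq hq]
          · -- both pass
            calc insF h n (k+1) (insF h n (k+1) T (some p)) (some q)
                = insF h n (k+1) (insF h (n+1) k T (some p)) (some q) := by
                  rw [insF_succ_gt (ltt_asymm hp) (ltt_ne_fix hp).symm]
              _ = insF h (n+1) k (insF h (n+1) k T (some p)) (some q) :=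
                  insF_succ_gt2 (by rw [insF_read_top]) (ltt_asymm hq)
                    (ltt_ne_fix hq).symm
              _ = insF h (n+1) k (insF h (n+1) k T (some q)) (some p) :=
                  ih (n+1) T (some p) (some q)
              _ = insF h n (k+1) (insF h (n+1) k T (some q)) (some p) :=
                  (insF_succ_gt2 (by rw [insF_read_top]) (ltt_asymm hp)
                    (ltt_ne_fix hp).symm).symm
              _ = insF h n (k+1) (insF h n (k+1) T (some q)) (some p) := by
                  rw [insF_succ_gt (ltt_asymm hq) (ltt_ne_fix hq).symm]

lemma lexInsert_eq_insF (h : ℕ → ID → Idx) (d : ℕ) (T : ℕ → Idx → ID × ℕ)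
    (p : ID × ℕ) : lexInsert h d T p = insF h 0 d T (some p) := by
  unfold lexInsert insF
  rw [lexRun_eq_runSeg]

lemma lexInsert_comm (h : ℕ → ID → Idx) (d : ℕ) (T : ℕ → Idx → ID × ℕ)
    (p q : ID × ℕ) :
    lexInsert h d (lexInsert h d T p) q = lexInsert h d (lexInsert h d T q) p := by
  simp only [lexInsert_eq_insF]
  exact insF_comm h d 0 T (some p) (some q)

lemma lexTableAfter_perm (h : ℕ → ID → Idx) (d : ℕ) {l₁ l₂ : List (ID × ℕ)}
    (hp : l₁.Perm l₂) : ∀ T : ℕ → Idx → ID × ℕ,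
    lexTableAfter h d T l₁ = lexTableAfter h d T l₂ := by
  induction hp with
  | nil => intro T; rfl
  | cons x _ ih =>
    intro T
    exact ih (lexInsert h d T x)
  | swap x y l =>
    intro T
    show (l.foldl (lexInsert h d) (lexInsert h d (lexInsert h d T y) x)) = _
    rw [lexInsert_comm]
    rfl
  | trans _ _ ih₁ ih₂ =>
    intro T
    rw [ih₁ T, ih₂ T]

end LexPipeline

/-- main theorem of the NODE paper: two switches that process the same
multiset of packets, in possibly different orders, through the pipeline insertion
process with identical hash functions, starting from the same all-zero table, end up
with identical tables at every position of every vector. -/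
theorem tables_identical_of_perm {ID Idx : Type} [LinearOrder ID] [DecidableEq Idx]
    (h : ℕ → ID → Idx) (d : ℕ) (T₀ : ℕ → Idx → ID × ℕ)
    (hT₀ : ∀ i j, (T₀ i j).2 = 0) (l₁ l₂ : List (ID × ℕ)) (hperm : l₁.Perm l₂) :
    ∀ i : ℕ, i < d → ∀ j : Idx,
      (lexTableAfter h d T₀ l₁) i j = (lexTableAfter h d T₀ l₂) i j := by
  intro i _ j
  rw [lexTableAfter_perm h d hperm T₀]
end

section
/- In the pipeline insertion process with lexicographic (count, ID) comparison, the multiset of pairs consisting of all stored pairs together with the pair carried out by the packet at the end of its traversal equals the multiset of all initially stored pairs together with the incoming packet's pair (insertion is a conservative rearrangement). -/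
/-- Multiset of all pairs stored in the first `d` vectors of a table. -/
def lexContents {ID Idx : Type} [Fintype Idx] (d : ℕ)
    (T : ℕ → Idx → ID × ℕ) : Multiset (ID × ℕ) :=
  ((Finset.range d) ×ˢ (Finset.univ : Finset Idx)).val.map fun q => T q.1 q.2

lemma lexContents_succ {ID Idx : Type} [Fintype Idx] (d : ℕ) (T : ℕ → Idx → ID × ℕ) :
    lexContents (d+1) T = lexContents d T + (Finset.univ : Finset Idx).val.map (T d) := by
  unfold lexContents
  have h1 : (Finset.range (d+1)).val = d ::ₘ (Finset.range d).val := by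
    rw [Finset.range_add_one, Finset.insert_val_of_notMem (by simp)]
  rw [Finset.product_val, Finset.product_val, h1, Multiset.cons_product,
    Multiset.map_add, Multiset.map_map, add_comm]
  rfl

lemma lexContents_congr {ID Idx : Type} [Fintype Idx] (d : ℕ)
    (T T' : ℕ → Idx → ID × ℕ) (hT : ∀ i j, i < d → T i j = T' i j) :
    lexContents d T = lexContents d T' := by
  unfold lexContents
  apply Multiset.map_congr rfl
  intro q hq
  rw [Finset.mem_val, Finset.mem_product, Finset.mem_range] at hq
  exact hT q.1 q.2 hq.1

lemma row_swap {ID Idx : Type} [DecidableEq Idx] [Fintype Idx]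
    (f : Idx → ID × ℕ) (j₀ : Idx) (q : ID × ℕ) :
    (Finset.univ : Finset Idx).val.map (fun j => if j = j₀ then q else f j) + {f j₀}
      = (Finset.univ : Finset Idx).val.map f + {q} := by
  have hmem : j₀ ∈ (Finset.univ : Finset Idx) := Finset.mem_univ _
  have h1 : (Finset.univ : Finset Idx).val = j₀ ::ₘ (Finset.univ.erase j₀).val := by
    rw [Finset.erase_val]
    exact (Multiset.cons_erase (Finset.mem_val.mpr hmem)).symm
  have h2 : (Finset.univ.erase j₀).val.map (fun j => if j = j₀ then q else f j)
      = (Finset.univ.erase j₀).val.map f := by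
    apply Multiset.map_congr rfl
    intro j hj
    have : j ≠ j₀ := Finset.ne_of_mem_erase (Finset.mem_val.mp hj)
    simp [this]
  rw [h1, Multiset.map_cons, Multiset.map_cons, h2, if_pos rfl]
  rw [← Multiset.singleton_add, ← Multiset.singleton_add]
  abel

lemma lexRun_main {ID Idx : Type} [LinearOrder ID] [DecidableEq Idx] [Fintype Idx]
    (h : ℕ → ID → Idx) (T : ℕ → Idx → ID × ℕ) (p : ID × ℕ) :
    ∀ n T' p', lexRun h T p n = (T', some p') →
      (∀ i j, n ≤ i → T' i j = T i j) ∧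
      lexContents n T' + {p'} = lexContents n T + {p} := by
  intro n
  induction n with
  | zero =>
    intro T' p' hrun
    simp only [lexRun] at hrun
    injection hrun with h1 h2
    injection h2 with h2
    subst h1; subst h2
    exact ⟨fun _ _ _ => rfl, rfl⟩
  | succ n ih =>
    intro T' p' hrun
    rw [lexRun] at hrun
    rcases hq : lexRun h T p n with ⟨T₁, o⟩
    rw [hq] at hrun
    cases o with
    | none => simp [lexStep] at hrun
    | some q =>
      obtain ⟨hT₁, hm⟩ := ih T₁ q hq
      simp only [lexStep] at hrun
      by_cases hc : (T₁ n (h n q.1)).2 < q.2 ∨ ((T₁ n (h n q.1)).2 = q.2 ∧ (T₁ n (h n q.1)).1 < q.1)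
      · rw [if_pos hc] at hrun
        injection hrun with hT' hp'
        injection hp' with hp'
        subst hT'; subst hp'
        constructor
        · intro i j hi
          have : ¬ (i = n ∧ j = h n q.1) := by
            rintro ⟨rfl, -⟩; omega
          simp only [this, if_false]
          exact hT₁ i j (by omega)
        · rw [lexContents_succ, lexContents_succ]
          have hrow : (Finset.univ : Finset Idx).val.map
              (fun j => if n = n ∧ j = h n q.1 then q else T₁ n j) + {T₁ n (h n q.1)}
              = (Finset.univ : Finset Idx).val.map (T₁ n) + {q} := by
            have := row_swap (T₁ n) (h n q.1) q
            simpa using this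
          have hlow : lexContents n (fun i j => if i = n ∧ j = h n q.1 then q else T₁ i j)
              = lexContents n T₁ := by
            apply lexContents_congr
            intro i j hi
            have : ¬ (i = n ∧ j = h n q.1) := by rintro ⟨rfl, -⟩; omega
            simp [this]
          have hrown : (Finset.univ : Finset Idx).val.map (T₁ n)
              = (Finset.univ : Finset Idx).val.map (T n) := by
            apply Multiset.map_congr rfl
            intro j _
            exact hT₁ n j le_rfl
          calc lexContents n (fun i j => if i = n ∧ j = h n q.1 then q else T₁ i j)
                + (Finset.univ : Finset Idx).val.map
                  (fun j => if n = n ∧ j = h n q.1 then q else T₁ n j) + {T₁ n (h n q.1)}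
              = lexContents n T₁ + ((Finset.univ : Finset Idx).val.map (T₁ n) + {q}) := by
                rw [hlow, add_assoc, hrow]
            _ = lexContents n T + (Finset.univ : Finset Idx).val.map (T n) + {p} := by
                rw [hrown, ← add_assoc, add_right_comm, hm, add_right_comm]
      · rw [if_neg hc] at hrun
        by_cases he : T₁ n (h n q.1) = q
        · simp [he] at hrun
        · rw [if_neg he] at hrun
          injection hrun with hT' hp'
          injection hp' with hp'
          subst hT'; subst hp'
          refine ⟨fun i j hi => hT₁ i j (by omega), ?_⟩
          rw [lexContents_succ, lexContents_succ]
          have hrown : (Finset.univ : Finset Idx).val.map (T₁ n)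
              = (Finset.univ : Finset Idx).val.map (T n) :=
            Multiset.map_congr rfl fun j _ => hT₁ n j le_rfl
          rw [hrown, add_right_comm, hm, add_right_comm]

/-- a single packet insertion that does not stop early is a conservative
rearrangement: the multiset of stored pairs together with the pair carried out by the
packet equals the multiset of initially stored pairs together with the inserted pair. -/
theorem insertion_conservative {ID Idx : Type} [LinearOrder ID] [DecidableEq Idx]
    [Fintype Idx] (h : ℕ → ID → Idx) (d : ℕ)
    (T T' : ℕ → Idx → ID × ℕ) (p p' : ID × ℕ)
    (hrun : lexRun h T p d = (T', some p')) :
    lexContents d T' + {p'} = lexContents d T + {p} :=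
  (lexRun_main h T p d T' p' hrun).2
end
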